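/- Let s, t > 0, let u₁, u₂ ∈ ℝ, and let χ : ℝ × ℝ → ℝ be bounded and continuous. Then the limit as ε → 0⁺ of ∫₀^s ∫₀^t ( ∫_ℝ (T_{|r₁−r₂|} ι^ε_{u₁})(u) · ι^ε_{u₂}(u) · χ(r₂, u) du ) dr₂ dr₁ (the inner integrand being defined for r₁ ≠ r₂, i.e. almost everywhere) exists and equals ∫₀^s ∫₀^t p_{|r₁−r₂|}(u₁, u₂) · χ(r₂, u₂) dr₂ dr₁. -/

import Mathlib

/-- The Gaussian heat kernel `p_t(x,y) = (4πt)^{-1/2} exp(-(x-y)²/(4t))`. -/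
noncomputable def hk (t x y : ℝ) : ℝ :=
  (4 * Real.pi * t) ^ (-(1:ℝ)/2) * Real.exp (-(x - y)^2 / (4 * t))

/-- The heat semigroup `(T_t f)(x) = ∫ p_t(x,y) f(y) dy`. -/
noncomputable def heatSg (t : ℝ) (f : ℝ → ℝ) (x : ℝ) : ℝ := ∫ y : ℝ, hk t x y * f y

/-- The triangular approximation `G^K_u` of the Heaviside function centred at `u`. -/
noncomputable def G (K u v : ℝ) : ℝ := if u ≤ v then max 0 (1 - (v - u) / K) else 0

/-- The normalized indicator `ι^ε_u = ε⁻¹ 1_{[u, u+ε]}`. -/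
noncomputable def iot (ε u : ℝ) : ℝ → ℝ := Set.indicator (Set.Icc u (u + ε)) (fun _ => ε⁻¹)

/-- The Gaussian tail function `Φ_t(a) = ∫_a^∞ p_t(0,v) dv`. -/
noncomputable def Phi (t a : ℝ) : ℝ := ∫ v in Set.Ioi a, hk t 0 v

open MeasureTheory Real Set Filter intervalIntegral

section Helpers

lemma hk_symm (t x y : ℝ) : hk t x y = hk t y x := by unfold hk; ring_nf

lemma hk_nonneg {t : ℝ} (ht : 0 ≤ t) (x y : ℝ) : 0 ≤ hk t x y := by
  unfold hk
  have : (0:ℝ) ≤ 4 * Real.pi * t := by positivity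
  positivity

lemma hk_le {t : ℝ} (ht : 0 ≤ t) (x y : ℝ) : hk t x y ≤ (4 * Real.pi * t) ^ (-(1:ℝ)/2) := by
  unfold hk
  have h0 : (0:ℝ) ≤ 4 * Real.pi * t := by positivity
  have h1 : Real.exp (-(x - y)^2 / (4 * t)) ≤ 1 := by
    apply Real.exp_le_one_iff.2
    apply div_nonpos_of_nonpos_of_nonneg (neg_nonpos.mpr (sq_nonneg _)) (by linarith)
  calc _ ≤ (4 * Real.pi * t) ^ (-(1:ℝ)/2) * 1 := by
        apply mul_le_mul_of_nonneg_left h1 (Real.rpow_nonneg h0 _)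
    _ = _ := mul_one _

lemma hk_meas : Measurable fun p : ℝ × ℝ × ℝ => hk p.1 p.2.1 p.2.2 := by
  unfold hk; fun_prop

lemma hk_contA {t : ℝ} : Continuous fun p : ℝ × ℝ => hk t p.1 p.2 := by
  unfold hk
  apply Continuous.mul continuous_const
  apply Real.continuous_exp.comp
  exact (Continuous.div_const (by fun_prop) _)

lemma mul_iot_mul_integral {ε : ℝ} (hε : 0 < ε) (f g : ℝ → ℝ) (a : ℝ) :
    ∫ u, f u * iot ε a u * g u = ε⁻¹ * ∫ u in a..(a+ε), f u * g u := by
  have h1 : (fun u => f u * iot ε a u * g u)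
      = Set.indicator (Set.Icc a (a+ε)) (fun u => ε⁻¹ * (f u * g u)) := by
    funext u
    by_cases h : u ∈ Set.Icc a (a+ε)
    · simp [iot, Set.indicator_of_mem h]; ring
    · simp [iot, Set.indicator_of_notMem h]
  rw [h1, MeasureTheory.integral_indicator measurableSet_Icc,
    MeasureTheory.integral_Icc_eq_integral_Ioc,
    ← intervalIntegral.integral_of_le (by linarith : a ≤ a + ε),
    intervalIntegral.integral_const_mul]

lemma iot_mul_integral {ε : ℝ} (hε : 0 < ε) (f : ℝ → ℝ) (a : ℝ) :
    ∫ u, f u * iot ε a u = ε⁻¹ * ∫ u in a..(a+ε), f u := by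
  have := mul_iot_mul_integral hε f (fun _ => 1) a
  simpa using this

/-- Rewritten (box-average) form of the inner integral. -/
noncomputable def Jf (χ : ℝ × ℝ → ℝ) (u₁ u₂ ε τ v : ℝ) : ℝ :=
  ε⁻¹ * ∫ u in u₂..(u₂+ε), (ε⁻¹ * ∫ y in u₁..(u₁+ε), hk τ u y) * χ (v, u)

lemma F_eq (χ : ℝ × ℝ → ℝ) (u₁ u₂ : ℝ) {ε : ℝ} (hε : 0 < ε) (τ v : ℝ) :
    (∫ u, heatSg τ (iot ε u₁) u * iot ε u₂ u * χ (v, u)) = Jf χ u₁ u₂ ε τ v := by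
  rw [mul_iot_mul_integral hε, Jf]
  congr 1
  apply intervalIntegral.integral_congr
  intro u _
  simp only [heatSg]; rw [iot_mul_integral hε]

lemma Jf_tendsto (χ : ℝ × ℝ → ℝ) (hχc : Continuous χ) (u₁ u₂ : ℝ) {τ : ℝ} (v : ℝ) :
    Tendsto (fun ε => Jf χ u₁ u₂ ε τ v) (nhdsWithin 0 (Set.Ioi 0))
      (nhds (hk τ u₂ u₁ * χ (v, u₂))) := by
  set g : ℝ × ℝ → ℝ := fun p => hk τ p.1 p.2 * χ (v, p.1) with hg
  have hgc : Continuous g := hk_contA.mul (hχc.comp (by fun_prop))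
  set L : ℝ := hk τ u₂ u₁ * χ (v, u₂) with hL
  rw [Metric.tendsto_nhdsWithin_nhds]
  intro δ hδ
  obtain ⟨η, hη, hcont⟩ := Metric.continuousAt_iff.1 (hgc.continuousAt (x := (u₂, u₁)))
    (δ/2) (by linarith)
  refine ⟨η, hη, ?_⟩
  intro ε hεpos hεd
  have hε : 0 < ε := hεpos
  have hεη : ε < η := by
    have : dist ε 0 = ε := by rw [Real.dist_eq, sub_zero, abs_of_pos hε]
    linarith [hεd, this.symm.le]
  -- key pointwise bound on the box
  have hbox : ∀ u ∈ Set.uIoc u₂ (u₂+ε), ∀ y ∈ Set.uIoc u₁ (u₁+ε),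
      ‖g (u, y) - L‖ ≤ δ/2 := by
    intro u hu y hy
    rw [Set.uIoc_of_le (by linarith : u₂ ≤ u₂ + ε)] at hu
    rw [Set.uIoc_of_le (by linarith : u₁ ≤ u₁ + ε)] at hy
    obtain ⟨hu1, hu2⟩ := hu
    obtain ⟨hy1, hy2⟩ := hy
    have hd : dist (u, y) (u₂, u₁) < η := by
      rw [Prod.dist_eq]
      apply max_lt
      · rw [Real.dist_eq, abs_of_nonneg (by linarith)]; linarith
      · rw [Real.dist_eq, abs_of_nonneg (by linarith)]; linarith
    have := hcont hd
    rw [Real.dist_eq] at this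
    exact le_of_lt this
  set k : ℝ → ℝ := fun u => ε⁻¹ * ∫ y in u₁..(u₁+ε), g (u, y) with hk'
  have hJf : Jf χ u₁ u₂ ε τ v = ε⁻¹ * ∫ u in u₂..(u₂+ε), k u := by
    rw [Jf]
    congr 1
    apply intervalIntegral.integral_congr
    intro u _
    simp only [hk', hg]
    rw [mul_assoc, ← intervalIntegral.integral_mul_const]
  have hkc : Continuous k := by
    apply continuous_const.mul
    exact intervalIntegral.continuous_parametric_intervalIntegral_of_continuous'
      (f := fun u y => g (u, y)) (by exact hgc) _ _
  have hkb : ∀ u ∈ Set.uIoc u₂ (u₂+ε), ‖k u - L‖ ≤ δ/2 := by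
    intro u hu
    have hsub : k u - L = ε⁻¹ * ∫ y in u₁..(u₁+ε), (g (u, y) - L) := by
      have hgi : IntervalIntegrable (fun y => g (u, y)) MeasureTheory.volume u₁ (u₁+ε) :=
        (hgc.comp (Continuous.prodMk_right u)).intervalIntegrable _ _
      rw [intervalIntegral.integral_sub hgi intervalIntegrable_const,
        intervalIntegral.integral_const]
      rw [add_sub_cancel_left, smul_eq_mul, mul_sub, hk']
      rw [← mul_assoc, inv_mul_cancel₀ hε.ne', one_mul]
    rw [hsub, norm_mul]
    have h1 : ‖∫ y in u₁..(u₁+ε), (g (u, y) - L)‖ ≤ δ/2 * |u₁ + ε - u₁| :=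
      intervalIntegral.norm_integral_le_of_norm_le_const (fun y hy => hbox u hu y hy)
    have h2 : |u₁ + ε - u₁| = ε := by rw [add_sub_cancel_left, abs_of_pos hε]
    rw [h2] at h1
    calc ‖ε⁻¹‖ * ‖∫ y in u₁..(u₁+ε), (g (u, y) - L)‖
        ≤ ε⁻¹ * (δ/2 * ε) := by
          apply mul_le_mul (le_of_eq (by rw [Real.norm_eq_abs, abs_of_pos (by positivity)]))
            h1 (norm_nonneg _) (by positivity)
      _ = δ/2 := by field_simp
  rw [Real.dist_eq, hJf]
  have hsub2 : ε⁻¹ * (∫ u in u₂..(u₂+ε), k u) - L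
      = ε⁻¹ * ∫ u in u₂..(u₂+ε), (k u - L) := by
    rw [intervalIntegral.integral_sub (hkc.intervalIntegrable _ _) intervalIntegrable_const,
      intervalIntegral.integral_const, add_sub_cancel_left, smul_eq_mul, mul_sub,
      ← mul_assoc, inv_mul_cancel₀ hε.ne', one_mul]
  rw [hsub2, abs_mul]
  have h1 : ‖∫ u in u₂..(u₂+ε), (k u - L)‖ ≤ δ/2 * |u₂ + ε - u₂| :=
    intervalIntegral.norm_integral_le_of_norm_le_const hkb
  have h2 : |u₂ + ε - u₂| = ε := by rw [add_sub_cancel_left, abs_of_pos hε]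
  rw [h2] at h1
  rw [Real.norm_eq_abs] at h1
  calc |ε⁻¹| * |∫ u in u₂..(u₂+ε), (k u - L)|
      ≤ ε⁻¹ * (δ/2 * ε) := by
        apply mul_le_mul (le_of_eq (by rw [abs_of_pos (by positivity)])) h1
          (abs_nonneg _) (by positivity)
    _ = δ/2 := by field_simp
    _ < δ := by linarith

lemma Jf_bound (χ : ℝ × ℝ → ℝ) (M : ℝ) (hχb : ∀ z, |χ z| ≤ M) (u₁ u₂ : ℝ)
    {ε : ℝ} (hε : 0 < ε) {τ : ℝ} (hτ : 0 ≤ τ) (v : ℝ) :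
    ‖Jf χ u₁ u₂ ε τ v‖ ≤ M * (4 * Real.pi * τ) ^ (-(1:ℝ)/2) := by
  have hM : 0 ≤ M := le_trans (abs_nonneg _) (hχb (v, u₂))
  set B : ℝ := (4 * Real.pi * τ) ^ (-(1:ℝ)/2) with hB
  have hBpos : 0 ≤ B := Real.rpow_nonneg (by positivity) _
  have hin : ∀ u, ‖∫ y in u₁..(u₁+ε), hk τ u y‖ ≤ B * |u₁ + ε - u₁| := by
    intro u
    apply intervalIntegral.norm_integral_le_of_norm_le_const
    intro y _
    rw [Real.norm_eq_abs, abs_of_nonneg (hk_nonneg hτ _ _)]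
    exact hk_le hτ _ _
  have habs : |u₁ + ε - u₁| = ε := by rw [add_sub_cancel_left, abs_of_pos hε]
  have hmid : ∀ u ∈ Set.uIoc u₂ (u₂+ε),
      ‖(ε⁻¹ * ∫ y in u₁..(u₁+ε), hk τ u y) * χ (v, u)‖ ≤ B * M := by
    intro u _
    rw [norm_mul, norm_mul, Real.norm_eq_abs ε⁻¹, abs_of_pos (by positivity)]
    calc ε⁻¹ * ‖∫ y in u₁..(u₁+ε), hk τ u y‖ * ‖χ (v, u)‖
        ≤ ε⁻¹ * (B * ε) * M := by
          apply mul_le_mul _ (hχb _) (abs_nonneg _) (by positivity)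
          apply mul_le_mul_of_nonneg_left _ (by positivity)
          calc ‖∫ y in u₁..(u₁+ε), hk τ u y‖ ≤ B * |u₁ + ε - u₁| := hin u
            _ = B * ε := by rw [habs]
      _ = B * M := by field_simp
  rw [Jf, norm_mul, Real.norm_eq_abs ε⁻¹, abs_of_pos (by positivity)]
  calc ε⁻¹ * ‖∫ u in u₂..(u₂+ε), (ε⁻¹ * ∫ y in u₁..(u₁+ε), hk τ u y) * χ (v, u)‖
      ≤ ε⁻¹ * (B * M * |u₂ + ε - u₂|) := by
        apply mul_le_mul_of_nonneg_left _ (by positivity)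
        exact intervalIntegral.norm_integral_le_of_norm_le_const hmid
    _ = M * B := by rw [add_sub_cancel_left, abs_of_pos hε]; field_simp

lemma Jf_sm (χ : ℝ × ℝ → ℝ) (hχc : Continuous χ) (u₁ u₂ : ℝ) {ε : ℝ} (hε : 0 < ε) :
    StronglyMeasurable fun p : ℝ × ℝ => Jf χ u₁ u₂ ε p.1 p.2 := by
  have h1e : ∀ τ v, Jf χ u₁ u₂ ε τ v = ε⁻¹ * ∫ u in Set.Ioc u₂ (u₂+ε),
      (ε⁻¹ * ∫ y in Set.Ioc u₁ (u₁+ε), hk τ u y) * χ (v, u) := by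
    intro τ v
    rw [Jf, intervalIntegral.integral_of_le (by linarith : u₂ ≤ u₂ + ε)]
    congr 1
    apply MeasureTheory.setIntegral_congr_fun measurableSet_Ioc
    intro u _
    simp only []
    rw [intervalIntegral.integral_of_le (by linarith : u₁ ≤ u₁ + ε)]
  simp only [h1e]
  apply StronglyMeasurable.const_mul
  have hinner : StronglyMeasurable fun q : (ℝ × ℝ) × ℝ =>
      ∫ y in Set.Ioc u₁ (u₁+ε), hk q.1.1 q.2 y := by
    apply MeasureTheory.StronglyMeasurable.integral_prod_right'
      (f := fun w : ((ℝ × ℝ) × ℝ) × ℝ => hk w.1.1.1 w.1.2 w.2)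
    exact (hk_meas.comp (by fun_prop :
      Measurable fun w : ((ℝ × ℝ) × ℝ) × ℝ => (w.1.1.1, w.1.2, w.2))).stronglyMeasurable
  have houter : StronglyMeasurable fun q : (ℝ × ℝ) × ℝ =>
      (ε⁻¹ * ∫ y in Set.Ioc u₁ (u₁+ε), hk q.1.1 q.2 y) * χ (q.1.2, q.2) := by
    apply StronglyMeasurable.mul (hinner.const_mul _)
    exact (hχc.measurable.comp (by fun_prop :
      Measurable fun q : (ℝ × ℝ) × ℝ => (q.1.2, q.2))).stronglyMeasurable
  exact MeasureTheory.StronglyMeasurable.integral_prod_right'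
    (f := fun q : (ℝ × ℝ) × ℝ =>
      (ε⁻¹ * ∫ y in Set.Ioc u₁ (u₁+ε), hk q.1.1 q.2 y) * χ (q.1.2, q.2)) houter

lemma rpow_half_neg {x : ℝ} (hx : x < 0) : x ^ ((1:ℝ)/2) = 0 := by
  rw [Real.rpow_def_of_neg hx]
  have : ((1:ℝ)/2) * Real.pi = Real.pi / 2 := by ring
  rw [this, Real.cos_pi_div_two, mul_zero]

lemma rpow_neg_half_neg {x : ℝ} (hx : x < 0) : x ^ (-(1:ℝ)/2) = 0 := by
  rw [Real.rpow_def_of_neg hx]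
  have : (-(1:ℝ)/2) * Real.pi = -(Real.pi / 2) := by ring
  rw [this, Real.cos_neg, Real.cos_pi_div_two, mul_zero]

lemma rpow_half_nonneg (x : ℝ) : 0 ≤ x ^ ((1:ℝ)/2) := by
  rcases lt_or_ge x 0 with h | h
  · rw [rpow_half_neg h]
  · exact Real.rpow_nonneg h _

lemma abs_rpow_neg_half (x : ℝ) :
    |x| ^ (-(1:ℝ)/2) = x ^ (-(1:ℝ)/2) + (-x) ^ (-(1:ℝ)/2) := by
  rcases lt_trichotomy x 0 with h | h | h
  · rw [abs_of_neg h, rpow_neg_half_neg h]; ring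
  · subst h; simp [Real.zero_rpow (by norm_num : (-(1:ℝ)/2) ≠ 0)]
  · rw [abs_of_pos h, rpow_neg_half_neg (by linarith : -x < 0)]; ring

lemma ii_sub_right (r₁ t : ℝ) :
    IntervalIntegrable (fun x => (x - r₁) ^ (-(1:ℝ)/2)) MeasureTheory.volume 0 t := by
  have h := (intervalIntegrable_rpow' (r := -(1:ℝ)/2) (by norm_num)
    (a := 0 - r₁) (b := t - r₁)).comp_sub_right r₁
  simpa using h

lemma ii_sub_left (r₁ t : ℝ) :
    IntervalIntegrable (fun x => (r₁ - x) ^ (-(1:ℝ)/2)) MeasureTheory.volume 0 t := by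
  have h := (intervalIntegrable_rpow' (r := -(1:ℝ)/2) (by norm_num)
    (a := r₁) (b := r₁ - t)).comp_sub_left r₁
  simpa using h

lemma int_sub_right {t r₁ : ℝ} (ht : 0 ≤ t) (hr : 0 ≤ r₁) :
    (∫ x in (0:ℝ)..t, (x - r₁) ^ (-(1:ℝ)/2)) ≤ 2 * t ^ ((1:ℝ)/2) := by
  rw [intervalIntegral.integral_comp_sub_right (fun x => x ^ (-(1:ℝ)/2)) r₁]
  rw [integral_rpow (Or.inl (by norm_num))]
  have h1 : (t - r₁) ^ (-(1:ℝ)/2 + 1) ≤ t ^ ((1:ℝ)/2) := by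
    have he : (-(1:ℝ)/2 + 1) = (1:ℝ)/2 := by norm_num
    rw [he]
    rcases lt_or_ge (t - r₁) 0 with h | h
    · rw [rpow_half_neg h]; exact rpow_half_nonneg t
    · exact Real.rpow_le_rpow h (by linarith) (by norm_num)
  have h2 : 0 ≤ (0 - r₁) ^ (-(1:ℝ)/2 + 1) := by
    have he : (-(1:ℝ)/2 + 1) = (1:ℝ)/2 := by norm_num
    rw [he]; exact rpow_half_nonneg _
  have h3 : (0:ℝ) < -(1:ℝ)/2 + 1 := by norm_num
  rw [div_le_iff₀ h3]
  nlinarith [rpow_half_nonneg t]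

lemma int_sub_left {t s r₁ : ℝ} (ht : 0 ≤ t) (hr : 0 ≤ r₁) (hrs : r₁ ≤ s) :
    (∫ x in (0:ℝ)..t, (r₁ - x) ^ (-(1:ℝ)/2)) ≤ 2 * s ^ ((1:ℝ)/2) := by
  rw [intervalIntegral.integral_comp_sub_left (fun x => x ^ (-(1:ℝ)/2)) r₁]
  rw [integral_rpow (Or.inl (by norm_num))]
  have he : (-(1:ℝ)/2 + 1) = (1:ℝ)/2 := by norm_num
  have h1 : (r₁ - 0) ^ (-(1:ℝ)/2 + 1) ≤ s ^ ((1:ℝ)/2) := by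
    rw [he, sub_zero]
    exact Real.rpow_le_rpow hr hrs (by norm_num)
  have h2 : 0 ≤ (r₁ - t) ^ (-(1:ℝ)/2 + 1) := by rw [he]; exact rpow_half_nonneg _
  have h3 : (0:ℝ) < -(1:ℝ)/2 + 1 := by norm_num
  rw [div_le_iff₀ h3]
  nlinarith [rpow_half_nonneg s, Real.rpow_nonneg (le_trans hr hrs) ((1:ℝ)/2)]

lemma bd_split (r₁ x : ℝ) : (4*Real.pi*|r₁ - x|) ^ (-(1:ℝ)/2)
    = (4*Real.pi) ^ (-(1:ℝ)/2) * ((x - r₁) ^ (-(1:ℝ)/2) + (r₁ - x) ^ (-(1:ℝ)/2)) := by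
  rw [Real.mul_rpow (by positivity) (abs_nonneg _), abs_rpow_neg_half, neg_sub]
  ring

lemma gbd_integrable (M r₁ t : ℝ) (ht : 0 ≤ t) :
    MeasureTheory.IntegrableOn (fun r₂ => M * (4*Real.pi*|r₁ - r₂|) ^ (-(1:ℝ)/2))
      (Set.Ioc 0 t) MeasureTheory.volume := by
  rw [← intervalIntegrable_iff_integrableOn_Ioc_of_le ht]
  have h : IntervalIntegrable (fun x => (M * (4*Real.pi) ^ (-(1:ℝ)/2)) *
      ((x - r₁) ^ (-(1:ℝ)/2) + (r₁ - x) ^ (-(1:ℝ)/2))) MeasureTheory.volume 0 t :=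
    ((ii_sub_right r₁ t).add (ii_sub_left r₁ t)).const_mul _
  apply h.congr
  intro x _
  simp only [bd_split]; ring

lemma gbd_integral_le {M s t r₁ : ℝ} (hM : 0 ≤ M) (ht : 0 ≤ t) (hr : 0 ≤ r₁) (hrs : r₁ ≤ s) :
    (∫ r₂ in Set.Ioc (0:ℝ) t, M * (4*Real.pi*|r₁ - r₂|) ^ (-(1:ℝ)/2))
      ≤ M * (4*Real.pi) ^ (-(1:ℝ)/2) * (2 * t ^ ((1:ℝ)/2) + 2 * s ^ ((1:ℝ)/2)) := by
  rw [← intervalIntegral.integral_of_le ht]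
  have heq : (∫ r₂ in (0:ℝ)..t, M * (4*Real.pi*|r₁ - r₂|) ^ (-(1:ℝ)/2))
      = (M * (4*Real.pi) ^ (-(1:ℝ)/2)) *
        ((∫ x in (0:ℝ)..t, (x - r₁) ^ (-(1:ℝ)/2)) + ∫ x in (0:ℝ)..t, (r₁ - x) ^ (-(1:ℝ)/2)) := by
    rw [← intervalIntegral.integral_add (ii_sub_right r₁ t) (ii_sub_left r₁ t),
      ← intervalIntegral.integral_const_mul]
    apply intervalIntegral.integral_congr
    intro x _
    simp only []
    rw [bd_split]; ring
  rw [heq]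
  have hC : 0 ≤ M * (4*Real.pi) ^ (-(1:ℝ)/2) := by positivity
  calc (M * (4*Real.pi) ^ (-(1:ℝ)/2)) *
        ((∫ x in (0:ℝ)..t, (x - r₁) ^ (-(1:ℝ)/2)) + ∫ x in (0:ℝ)..t, (r₁ - x) ^ (-(1:ℝ)/2))
      ≤ (M * (4*Real.pi) ^ (-(1:ℝ)/2)) * (2 * t ^ ((1:ℝ)/2) + 2 * s ^ ((1:ℝ)/2)) := by
        apply mul_le_mul_of_nonneg_left _ hC
        exact add_le_add (int_sub_right ht hr) (int_sub_left ht hr hrs)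
    _ = _ := by ring

end Helpers



attribute [irreducible] Jf hk heatSg iot

lemma inner_tendsto (t : ℝ) (ht : 0 < t) (u₁ u₂ : ℝ)
    (χ : ℝ × ℝ → ℝ) (hχc : Continuous χ) (M : ℝ) (hχb : ∀ z, |χ z| ≤ M) (r₁ : ℝ) :
    Tendsto (fun ε : ℝ => ∫ r₂ in Set.Ioc (0:ℝ) t, ∫ u : ℝ,
        heatSg |r₁ - r₂| (iot ε u₁) u * iot ε u₂ u * χ (r₂, u))
      (nhdsWithin 0 (Set.Ioi 0))
      (nhds (∫ r₂ in Set.Ioc (0:ℝ) t, hk |r₁ - r₂| u₁ u₂ * χ (r₂, u₂))) := by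
  apply MeasureTheory.tendsto_integral_filter_of_dominated_convergence
    (bound := fun r₂ => M * (4*Real.pi*|r₁ - r₂|) ^ (-(1:ℝ)/2))
  · filter_upwards [self_mem_nhdsWithin] with ε hε
    have hε' : (0:ℝ) < ε := hε
    have heq : (fun r₂ => ∫ u : ℝ,
        heatSg |r₁ - r₂| (iot ε u₁) u * iot ε u₂ u * χ (r₂, u))
        = fun r₂ => Jf χ u₁ u₂ ε |r₁ - r₂| r₂ :=
      funext fun r₂ => F_eq χ u₁ u₂ hε' _ _
    rw [heq]
    exact ((Jf_sm χ hχc u₁ u₂ hε').comp_measurable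
      (by fun_prop : Measurable fun r₂ : ℝ => (|r₁ - r₂|, r₂))).aestronglyMeasurable
  · filter_upwards [self_mem_nhdsWithin] with ε hε
    have hε' : (0:ℝ) < ε := hε
    apply MeasureTheory.ae_of_all
    intro r₂
    rw [F_eq χ u₁ u₂ hε']
    exact Jf_bound χ M hχb u₁ u₂ hε' (abs_nonneg _) r₂
  · exact gbd_integrable M r₁ t ht.le
  · apply MeasureTheory.ae_of_all
    intro r₂
    have h := Jf_tendsto χ hχc u₁ u₂ (τ := |r₁ - r₂|) r₂
    rw [hk_symm] at h
    apply h.congr'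
    filter_upwards [self_mem_nhdsWithin] with ε hε
    exact (F_eq χ u₁ u₂ hε _ _).symm


lemma outer_tendsto (s t : ℝ) (hs : 0 < s) (ht : 0 < t) (u₁ u₂ : ℝ)
    (χ : ℝ × ℝ → ℝ) (hχc : Continuous χ) (M : ℝ) (hχb : ∀ z, |χ z| ≤ M) :
    Tendsto (fun ε : ℝ => ∫ r₁ in Set.Ioc (0:ℝ) s, ∫ r₂ in Set.Ioc (0:ℝ) t, ∫ u : ℝ,
        heatSg |r₁ - r₂| (iot ε u₁) u * iot ε u₂ u * χ (r₂, u))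
      (nhdsWithin 0 (Set.Ioi 0))
      (nhds (∫ r₁ in Set.Ioc (0:ℝ) s,
        ∫ r₂ in Set.Ioc (0:ℝ) t, hk |r₁ - r₂| u₁ u₂ * χ (r₂, u₂))) := by
  have hM : 0 ≤ M := le_trans (abs_nonneg _) (hχb (0, 0))
  apply MeasureTheory.tendsto_integral_filter_of_dominated_convergence
    (bound := fun _ => M * (4*Real.pi) ^ (-(1:ℝ)/2) * (2 * t ^ ((1:ℝ)/2) + 2 * s ^ ((1:ℝ)/2)))
  · filter_upwards [self_mem_nhdsWithin] with ε hε
    have hε' : (0:ℝ) < ε := hε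
    have heq : (fun r₁ => ∫ r₂ in Set.Ioc (0:ℝ) t, ∫ u : ℝ,
        heatSg |r₁ - r₂| (iot ε u₁) u * iot ε u₂ u * χ (r₂, u))
        = fun r₁ => ∫ r₂ in Set.Ioc (0:ℝ) t, Jf χ u₁ u₂ ε |r₁ - r₂| r₂ := by
      funext r₁
      apply MeasureTheory.integral_congr_ae
      apply MeasureTheory.ae_of_all
      intro r₂
      exact F_eq χ u₁ u₂ hε' _ _
    rw [heq]
    have hsm : StronglyMeasurable fun p : ℝ × ℝ => Jf χ u₁ u₂ ε |p.1 - p.2| p.2 :=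
      (Jf_sm χ hχc u₁ u₂ hε').comp_measurable
        (by fun_prop : Measurable fun p : ℝ × ℝ => (|p.1 - p.2|, p.2))
    exact (MeasureTheory.StronglyMeasurable.integral_prod_right'
      (f := fun p : ℝ × ℝ => Jf χ u₁ u₂ ε |p.1 - p.2| p.2) hsm).aestronglyMeasurable
  · filter_upwards [self_mem_nhdsWithin] with ε hε
    have hε' : (0:ℝ) < ε := hε
    filter_upwards [MeasureTheory.ae_restrict_mem measurableSet_Ioc] with r₁ hr₁
    calc ‖∫ r₂ in Set.Ioc (0:ℝ) t, ∫ u : ℝ,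
          heatSg |r₁ - r₂| (iot ε u₁) u * iot ε u₂ u * χ (r₂, u)‖
        ≤ ∫ r₂ in Set.Ioc (0:ℝ) t, M * (4*Real.pi*|r₁ - r₂|) ^ (-(1:ℝ)/2) := by
          apply MeasureTheory.norm_integral_le_of_norm_le (gbd_integrable M r₁ t ht.le)
          apply MeasureTheory.ae_of_all
          intro r₂
          rw [F_eq χ u₁ u₂ hε']
          exact Jf_bound χ M hχb u₁ u₂ hε' (abs_nonneg _) r₂
      _ ≤ _ := gbd_integral_le hM ht.le hr₁.1.le hr₁.2
  · exact MeasureTheory.integrable_const _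
  · exact MeasureTheory.ae_of_all _ (inner_tendsto t ht u₁ u₂ χ hχc M hχb)


set_option maxHeartbeats 1000000 in
/-- Limit of the static part of the covariance of two occupation times: as `ε → 0⁺`,
`∫₀^s ∫₀^t ∫ (T_{|r₁-r₂|} ι^ε_{u₁})(u) ι^ε_{u₂}(u) χ(r₂,u) du dr₂ dr₁` converges to
`∫₀^s ∫₀^t p_{|r₁-r₂|}(u₁,u₂) χ(r₂,u₂) dr₂ dr₁`. -/
theorem stmt18 (s t : ℝ) (hs : 0 < s) (ht : 0 < t) (u₁ u₂ : ℝ)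
    (χ : ℝ × ℝ → ℝ) (hχc : Continuous χ) (M : ℝ) (hχb : ∀ z, |χ z| ≤ M) :
    Filter.Tendsto (fun ε : ℝ =>
        ∫ r₁ in (0:ℝ)..s, ∫ r₂ in (0:ℝ)..t, ∫ u : ℝ,
          heatSg |r₁ - r₂| (iot ε u₁) u * iot ε u₂ u * χ (r₂, u))
      (nhdsWithin 0 (Set.Ioi 0))
      (nhds (∫ r₁ in (0:ℝ)..s, ∫ r₂ in (0:ℝ)..t, hk |r₁ - r₂| u₁ u₂ * χ (r₂, u₂))) := by
  have hconv : ∀ ε : ℝ,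
      (∫ r₁ in (0:ℝ)..s, ∫ r₂ in (0:ℝ)..t, ∫ u : ℝ,
          heatSg |r₁ - r₂| (iot ε u₁) u * iot ε u₂ u * χ (r₂, u))
      = ∫ r₁ in Set.Ioc (0:ℝ) s, ∫ r₂ in Set.Ioc (0:ℝ) t, ∫ u : ℝ,
          heatSg |r₁ - r₂| (iot ε u₁) u * iot ε u₂ u * χ (r₂, u) := by
    intro ε
    rw [intervalIntegral.integral_of_le hs.le]
    apply MeasureTheory.integral_congr_ae
    apply MeasureTheory.ae_of_all
    intro r₁
    simp only []
    rw [intervalIntegral.integral_of_le ht.le]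
  have hconv2 :
      (∫ r₁ in (0:ℝ)..s, ∫ r₂ in (0:ℝ)..t, hk |r₁ - r₂| u₁ u₂ * χ (r₂, u₂))
      = ∫ r₁ in Set.Ioc (0:ℝ) s, ∫ r₂ in Set.Ioc (0:ℝ) t,
          hk |r₁ - r₂| u₁ u₂ * χ (r₂, u₂) := by
    rw [intervalIntegral.integral_of_le hs.le]
    apply MeasureTheory.integral_congr_ae
    apply MeasureTheory.ae_of_all
    intro r₁
    simp only []
    rw [intervalIntegral.integral_of_le ht.le]
  rw [hconv2]
  exact (outer_tendsto s t hs ht u₁ u₂ χ hχc M hχb).congr (fun ε => (hconv ε).symm)
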